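/- For every integer ℓ ≥ 1, let k = ⌈ℓ · log₂(3/2)⌉ and let c_ℓ denote the number of proper 3-colorings of the graph T(u,v,k,ℓ). Then c_ℓ ≤ 2^(6 · 3^ℓ). -/

import Mathlib

/-- The base relation for the graph `P(u,v,b)`: vertices are `Sum.inl 0 = u`,
`Sum.inl 1 = v`, and `Sum.inr i = v_{i+1}` (0-indexed path vertices).
Edges: consecutive path vertices, `u` to odd-numbered path vertices `v₁, v₃, …`
(even 0-based index), and `v` to even-numbered ones `v₂, v₄, …`. -/
def PAdj (b : ℕ) : (Fin 2 ⊕ Fin b) → (Fin 2 ⊕ Fin b) → Prop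
  | Sum.inr i, Sum.inr j => (j : ℕ) = (i : ℕ) + 1
  | Sum.inl x, Sum.inr i => (x : ℕ) = (i : ℕ) % 2
  | _, _ => False

/-- The graph `P(u,v,b)`. -/
def Pgraph (b : ℕ) : SimpleGraph (Fin 2 ⊕ Fin b) := SimpleGraph.fromRel (PAdj b)

/-- The set of proper 3-colorings of a graph `G`. -/
def properColorings {V : Type*} (G : SimpleGraph V) : Set (V → Fin 3) :=
  {ψ | ∀ a b, G.Adj a b → ψ a ≠ ψ b}

/-- The type of "inner" vertices of `T(u,v,k,ℓ)` (all vertices except the two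
special vertices `u, v`). At level `0` these are the `2^k` path vertices of
`P(u,v,2^k)`; at level `ℓ+1` they are the five path vertices `v₁,…,v₅` of the
base copy of `P(u,v,5)` together with the inner vertices of the three glued
copies of `T(·,·,k,ℓ)`. -/
def TInner (k : ℕ) : ℕ → Type
  | 0 => Fin (2 ^ k)
  | ℓ + 1 => Fin 5 ⊕ (Fin 3 × TInner k ℓ)

/-- The vertex type of `T(u,v,k,ℓ)`: the special vertices `u = Sum.inl 0`,
`v = Sum.inl 1` together with the inner vertices. -/
abbrev TVert (k ℓ : ℕ) : Type := Fin 2 ⊕ TInner k ℓ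

/-- The pair of path vertices of `P(u,v,5)` onto which the `c`-th copy of
`T(·,·,k,ℓ-1)` is glued: `(v₁,v₃)` for `c = 0`, `(v₂,v₄)` for `c = 1`,
`(v₃,v₅)` for `c = 2` (0-indexed). -/
def gluePair (c : Fin 3) : Fin 5 × Fin 5 :=
  (⟨c.val, by omega⟩, ⟨c.val + 2, by have := c.isLt; omega⟩)

/-- The embedding of the `c`-th copy of `T(·,·,k,ℓ)` into `T(u,v,k,ℓ+1)`:
its special vertices are identified with the glue pair, and its inner vertices
are tagged with `c`. -/
def embedT (k ℓ : ℕ) (c : Fin 3) : TVert k ℓ → TVert k (ℓ + 1)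
  | Sum.inl x => if x = 0 then Sum.inr (Sum.inl (gluePair c).1)
                 else Sum.inr (Sum.inl (gluePair c).2)
  | Sum.inr w => Sum.inr (Sum.inr (c, w))

/-- The embedding of the base copy of `P(u,v,5)` into `T(u,v,k,ℓ+1)`. -/
def embedP (k ℓ : ℕ) : (Fin 2 ⊕ Fin 5) → TVert k (ℓ + 1)
  | Sum.inl x => Sum.inl x
  | Sum.inr y => Sum.inr (Sum.inl y)

/-- The graph `T(u,v,k,ℓ)`, defined recursively: `T(u,v,k,0) = P(u,v,2^k)`, and
`T(u,v,k,ℓ+1)` is obtained from `P(u,v,5)` by gluing three copies of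
`T(·,·,k,ℓ)` onto the pairs `(v₁,v₃)`, `(v₂,v₄)`, `(v₃,v₅)`. -/
def TGraph (k : ℕ) : (ℓ : ℕ) → SimpleGraph (TVert k ℓ)
  | 0 => Pgraph (2 ^ k)
  | ℓ + 1 => SimpleGraph.fromRel (fun a b =>
      (∃ x y, (Pgraph 5).Adj x y ∧ a = embedP k ℓ x ∧ b = embedP k ℓ y) ∨
      (∃ c x y, (TGraph k ℓ).Adj x y ∧ a = embedT k ℓ c x ∧ b = embedT k ℓ c y))


/-!
Let `S_ℓ` and `M_ℓ` bound the number of colorings of `T(u,v,k,ℓ)` with prescribed colors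
`a = b`, resp. arbitrary `a, b`, on the special vertices `u, v`. If `a = b`, the path of
`P(u,v,n)` must alternate between the other two colors, so `S_0 ≤ 2`, and in `T(u,v,k,ℓ+1)`
every glued copy again sees equal colors on its special vertices: `S_{ℓ+1} ≤ 2 S_ℓ³`. In general
every path vertex has at most two admissible colors, so `M_0 ≤ 2^(2^k)`, and in every proper
coloring of `P(u,v,5)` one of the three glue pairs is monochromatic, so
`M_{ℓ+1} ≤ 2⁵ S_ℓ M_ℓ²`. Solving these recursions in the exponent, with `2^k ≤ 2 (3/2)^ℓ` from
the choice of `k` and a factor `9 ≤ 2⁴` for the choice of `(a, b)`, gives the bound.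
-/

open Sum

instance TInner.finite (k : ℕ) : ∀ ℓ, Finite (TInner k ℓ)
  | 0 => inferInstanceAs (Finite (Fin (2 ^ k)))
  | ℓ + 1 => have := TInner.finite k ℓ; inferInstanceAs (Finite (Fin 5 ⊕ (Fin 3 × TInner k ℓ)))

lemma Fin.eq_of_ne_of_ne_three {a b x y : Fin 3} (hab : a ≠ b) (hxa : x ≠ a) (hxb : x ≠ b)
    (hya : y ≠ a) (hyb : y ≠ b) : x = y := by
  revert a b x y; decide

lemma Fin.card_subtype_ne_three (a : Fin 3) : Nat.card {x : Fin 3 // x ≠ a} = 2 := by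
  rw [Nat.card_eq_fintype_card, Fintype.card_subtype_compl, Fintype.card_subtype_eq,
    Fintype.card_fin]

lemma Nat.card_sigma_le_mul {ι : Type*} [Finite ι] {β : ι → Type*} [∀ i, Finite (β i)] {n m : ℕ}
    (hι : Nat.card ι ≤ n) (hβ : ∀ i, Nat.card (β i) ≤ m) : Nat.card (Sigma β) ≤ n * m := by
  have := Fintype.ofFinite ι
  rw [Nat.card_sigma]
  calc ∑ i, Nat.card (β i) ≤ Nat.card ι • m := by
        rw [Nat.card_eq_fintype_card]; exact Finset.sum_le_card_nsmul _ _ _ fun i _ => hβ i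
    _ ≤ n * m := Nat.mul_le_mul_right m hι

lemma comp_mem_properColorings {V W : Type*} {G : SimpleGraph V} {H : SimpleGraph W} (f : G →g H)
    {ψ : W → Fin 3} (hψ : ψ ∈ properColorings H) : ψ ∘ f ∈ properColorings G :=
  fun _ _ hab => hψ _ _ (f.map_adj hab)

def boundaryColorings {I : Type*} (G : SimpleGraph (Fin 2 ⊕ I)) (a b : Fin 3) :
    Set (Fin 2 ⊕ I → Fin 3) :=
  {ψ ∈ properColorings G | ψ (inl 0) = a ∧ ψ (inl 1) = b}

lemma apply_inl_of_mem_boundaryColorings {I : Type*} {G : SimpleGraph (Fin 2 ⊕ I)} {a b : Fin 3}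
    {ψ : Fin 2 ⊕ I → Fin 3} (hψ : ψ ∈ boundaryColorings G a b) (x : Fin 2) :
    ψ (inl x) = ![a, b] x := by
  fin_cases x
  exacts [hψ.2.1, hψ.2.2]

lemma Pgraph.adj_inl_inr {b : ℕ} (i : Fin b) :
    (Pgraph b).Adj (inl ⟨i % 2, Nat.mod_lt _ two_pos⟩) (inr i) := by
  simp [Pgraph, PAdj]

lemma Pgraph.adj_inr_succ {b i : ℕ} (h : i + 1 < b) :
    (Pgraph b).Adj (inr ⟨i, by omega⟩) (inr ⟨i + 1, h⟩) := by
  simp [Pgraph, PAdj]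

lemma eq_of_mem_boundaryColorings {I : Type*} {G : SimpleGraph (Fin 2 ⊕ I)} {a b : Fin 3}
    {ψ ψ' : Fin 2 ⊕ I → Fin 3} (hψ : ψ ∈ boundaryColorings G a b)
    (hψ' : ψ' ∈ boundaryColorings G a b) (h : ∀ i, ψ (inr i) = ψ' (inr i)) : ψ = ψ' := by
  funext v
  rcases v with x | i
  · rw [apply_inl_of_mem_boundaryColorings hψ, apply_inl_of_mem_boundaryColorings hψ']
  · exact h i

section Pgraph

variable {b : ℕ} {ψ : Fin 2 ⊕ Fin b → Fin 3}

lemma Pgraph.apply_inr_ne_inl (hψ : ψ ∈ properColorings (Pgraph b)) (i : Fin b) :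
    ψ (inr i) ≠ ψ (inl ⟨i % 2, Nat.mod_lt _ two_pos⟩) :=
  (hψ _ _ (Pgraph.adj_inl_inr i)).symm

lemma Pgraph.apply_inr_succ_ne (hψ : ψ ∈ properColorings (Pgraph b)) {i : ℕ} (h : i + 1 < b) :
    ψ (inr ⟨i + 1, h⟩) ≠ ψ (inr ⟨i, by omega⟩) :=
  (hψ _ _ (Pgraph.adj_inr_succ h)).symm

lemma Pgraph.apply_inr_ne_of_mem_boundaryColorings {a : Fin 3}
    (hψ : ψ ∈ boundaryColorings (Pgraph b) a a) (i : Fin b) : ψ (inr i) ≠ a := by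
  have hu (x : Fin 2) : ψ (inl x) = a := by
    fin_cases x
    exacts [hψ.2.1, hψ.2.2]
  exact hu _ ▸ Pgraph.apply_inr_ne_inl hψ.1 i

lemma Pgraph.apply_inr_add_two {a : Fin 3} (hψ : ψ ∈ boundaryColorings (Pgraph b) a a) {i : ℕ}
    (h : i + 2 < b) : ψ (inr ⟨i, by omega⟩) = ψ (inr ⟨i + 2, h⟩) :=
  Fin.eq_of_ne_of_ne_three (Pgraph.apply_inr_ne_of_mem_boundaryColorings hψ _).symm
    (Pgraph.apply_inr_ne_of_mem_boundaryColorings hψ _)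
    (Pgraph.apply_inr_succ_ne hψ.1 (i := i) (by omega)).symm
    (Pgraph.apply_inr_ne_of_mem_boundaryColorings hψ _)
    (Pgraph.apply_inr_succ_ne hψ.1 h)

lemma card_boundaryColorings_Pgraph_le (b : ℕ) (a a' : Fin 3) :
    Nat.card (boundaryColorings (Pgraph b) a a') ≤ 2 ^ b := by
  let F (ψ : boundaryColorings (Pgraph b) a a') (i : Fin b) :
      {x : Fin 3 // x ≠ ![a, a'] ⟨i % 2, Nat.mod_lt _ two_pos⟩} :=
    ⟨ψ.1 (inr i), apply_inl_of_mem_boundaryColorings ψ.2 _ ▸ Pgraph.apply_inr_ne_inl ψ.2.1 i⟩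
  have hF : F.Injective := fun ψ ψ' h =>
    Subtype.ext (eq_of_mem_boundaryColorings ψ.2 ψ'.2 fun i => congrArg Subtype.val (congrFun h i))
  calc _ ≤ _ := Nat.card_le_card_of_injective F hF
    _ = 2 ^ b := by simp

lemma card_boundaryColorings_Pgraph_self_le (hb : 0 < b) (a : Fin 3) :
    Nat.card (boundaryColorings (Pgraph b) a a) ≤ 2 := by
  let F (ψ : boundaryColorings (Pgraph b) a a) : {x : Fin 3 // x ≠ a} :=
    ⟨ψ.1 (inr ⟨0, hb⟩), Pgraph.apply_inr_ne_of_mem_boundaryColorings ψ.2 _⟩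
  have hF : F.Injective := by
    intro ψ ψ' h
    refine Subtype.ext (eq_of_mem_boundaryColorings ψ.2 ψ'.2 fun ⟨i, hi⟩ => ?_)
    induction i with
    | zero => exact congrArg Subtype.val h
    | succ i ih =>
      have ih := ih (by omega)
      refine Fin.eq_of_ne_of_ne_three
        (Pgraph.apply_inr_ne_of_mem_boundaryColorings ψ.2 _).symm
        (Pgraph.apply_inr_ne_of_mem_boundaryColorings ψ.2 _) (Pgraph.apply_inr_succ_ne ψ.2.1 hi)
        (Pgraph.apply_inr_ne_of_mem_boundaryColorings ψ'.2 _) ?_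
      rw [ih]
      exact Pgraph.apply_inr_succ_ne ψ'.2.1 hi
  calc _ ≤ _ := Nat.card_le_card_of_injective F hF
    _ = 2 := Fin.card_subtype_ne_three a

end Pgraph

lemma Pgraph.exists_gluePair_eq {φ : Fin 2 ⊕ Fin 5 → Fin 3}
    (hφ : φ ∈ properColorings (Pgraph 5)) :
    ∃ c, φ (inr (gluePair c).1) = φ (inr (gluePair c).2) := by
  by_contra! h
  have hu (i : Fin 5) := Pgraph.apply_inr_ne_inl hφ i
  have hv {i : ℕ} (hi : i + 1 < 5) := Pgraph.apply_inr_succ_ne hφ hi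
  -- `v₀ v₁ v₂` and `v₂ v₃ v₄` are rainbow, and `u` avoids `v₀ v₂ v₄`, so `u` has the colors
  -- of both `v₁` and `v₃`.
  have hu₁ : φ (inr 1) = φ (inl 0) :=
    Fin.eq_of_ne_of_ne_three (h 0) (hv (i := 0) (by omega)) (hv (i := 1) (by omega)).symm
      (hu 0).symm (hu 2).symm
  have hu₃ : φ (inr 3) = φ (inl 0) :=
    Fin.eq_of_ne_of_ne_three (h 2) (hv (i := 2) (by omega)) (hv (i := 3) (by omega)).symm
      (hu 2).symm (hu 4).symm
  exact h 1 (hu₁.trans hu₃.symm)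

lemma Pgraph.gluePair_eq {φ : Fin 2 ⊕ Fin 5 → Fin 3} {a : Fin 3}
    (hφ : φ ∈ boundaryColorings (Pgraph 5) a a) (c : Fin 3) :
    φ (inr (gluePair c).1) = φ (inr (gluePair c).2) :=
  Pgraph.apply_inr_add_two hφ (i := c) (by omega)

lemma embedP_injective (k ℓ : ℕ) : (embedP k ℓ).Injective := by
  rintro (x | x) (y | y) h <;> cases h <;> rfl

lemma embedT_injective (k ℓ : ℕ) (c : Fin 3) : (embedT k ℓ c).Injective := by
  have hc : (gluePair c).1 ≠ (gluePair c).2 := by simp [gluePair, Fin.ext_iff]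
  rintro (x | x) (y | y) h <;> simp only [embedT] at h
  · split_ifs at h with hx hy hy
    · rw [hx, hy]
    · exact absurd (inl.inj (inr.inj h)) hc
    · exact absurd (inl.inj (inr.inj h)).symm hc
    · rw [Fin.eq_one_of_ne_zero x hx, Fin.eq_one_of_ne_zero y hy]
  · split_ifs at h <;> cases h
  · split_ifs at h <;> cases h
  · cases h; rfl

def embedPHom (k ℓ : ℕ) : Pgraph 5 →g TGraph k (ℓ + 1) where
  toFun := embedP k ℓ
  map_rel' {x y} h := by
    rw [TGraph, SimpleGraph.fromRel_adj]
    exact ⟨(embedP_injective k ℓ).ne h.ne, .inl (.inl ⟨x, y, h, rfl, rfl⟩)⟩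

def embedTHom (k ℓ : ℕ) (c : Fin 3) : TGraph k ℓ →g TGraph k (ℓ + 1) where
  toFun := embedT k ℓ c
  map_rel' {x y} h := by
    rw [TGraph, SimpleGraph.fromRel_adj]
    exact ⟨(embedT_injective k ℓ c).ne h.ne, .inl (.inr ⟨c, x, y, h, rfl, rfl⟩)⟩

lemma card_boundaryColorings_TGraph_succ_le (k ℓ : ℕ) (a b : Fin 3) {n m : ℕ}
    (hP : Nat.card (boundaryColorings (Pgraph 5) a b) ≤ n)
    (hT : ∀ φ ∈ boundaryColorings (Pgraph 5) a b, ∏ c, Nat.card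
      (boundaryColorings (TGraph k ℓ) (φ (inr (gluePair c).1)) (φ (inr (gluePair c).2))) ≤ m) :
    Nat.card (boundaryColorings (TGraph k (ℓ + 1)) a b) ≤ n * m := by
  let F (ψ : boundaryColorings (TGraph k (ℓ + 1)) a b) :
      (φ : boundaryColorings (Pgraph 5) a b) × ((c : Fin 3) → boundaryColorings (TGraph k ℓ)
        (φ.1 (inr (gluePair c).1)) (φ.1 (inr (gluePair c).2))) :=
    ⟨⟨ψ.1 ∘ embedPHom k ℓ, comp_mem_properColorings _ ψ.2.1, ψ.2.2⟩,
      fun c => ⟨ψ.1 ∘ embedTHom k ℓ c, comp_mem_properColorings _ ψ.2.1, rfl, rfl⟩⟩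
  have hF : F.Injective := by
    intro ψ ψ' h
    refine Subtype.ext (funext fun v => ?_)
    rcases v with z | y | ⟨c, w⟩
    · exact congrArg (fun s => s.1.1 (inl z)) h
    · exact congrArg (fun s => s.1.1 (inr y)) h
    · exact congrArg (fun s => (s.2 c).1 (inr w)) h
  calc _ ≤ _ := Nat.card_le_card_of_injective F hF
    _ ≤ n * m := Nat.card_sigma_le_mul hP fun φ => (Nat.card_pi).trans_le (hT φ φ.2)

def eqBoundaryExp : ℕ → ℕ
  | 0 => 1
  | ℓ + 1 => 3 * eqBoundaryExp ℓ + 1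

def boundaryExp (k : ℕ) : ℕ → ℕ
  | 0 => 2 ^ k
  | ℓ + 1 => 2 * boundaryExp k ℓ + eqBoundaryExp ℓ + 5

lemma card_boundaryColorings_TGraph_le (k ℓ : ℕ) :
    (∀ a, Nat.card (boundaryColorings (TGraph k ℓ) a a) ≤ 2 ^ eqBoundaryExp ℓ) ∧
      ∀ a b, Nat.card (boundaryColorings (TGraph k ℓ) a b) ≤ 2 ^ boundaryExp k ℓ := by
  induction ℓ with
  | zero =>
    exact ⟨card_boundaryColorings_Pgraph_self_le (Nat.two_pow_pos k),
      card_boundaryColorings_Pgraph_le _⟩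
  | succ ℓ ih =>
    obtain ⟨hS, hM⟩ := ih
    refine ⟨fun a => ?_, fun a b => ?_⟩
    · calc _ ≤ 2 * (2 ^ eqBoundaryExp ℓ) ^ 3 := by
            refine card_boundaryColorings_TGraph_succ_le k ℓ a a
              (card_boundaryColorings_Pgraph_self_le (by norm_num) a) fun φ hφ => ?_
            calc _ ≤ ∏ _c : Fin 3, 2 ^ eqBoundaryExp ℓ :=
                  Finset.prod_le_prod' fun c _ => Pgraph.gluePair_eq hφ c ▸ hS _
              _ = _ := Fin.prod_const 3 _
        _ = 2 ^ eqBoundaryExp (ℓ + 1) := by rw [eqBoundaryExp]; ring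
    · calc _ ≤ 2 ^ 5 * (2 ^ eqBoundaryExp ℓ * (2 ^ boundaryExp k ℓ) ^ 2) := by
            refine card_boundaryColorings_TGraph_succ_le k ℓ a b
              (card_boundaryColorings_Pgraph_le 5 a b) fun φ hφ => ?_
            obtain ⟨c₀, hc₀⟩ := Pgraph.exists_gluePair_eq hφ.1
            rw [← Finset.mul_prod_erase _ _ (Finset.mem_univ c₀)]
            refine Nat.mul_le_mul (hc₀ ▸ hS _)
              ((Finset.prod_le_pow_card _ _ _ fun c _ => hM _ _).trans_eq ?_)
            rw [Finset.card_erase_of_mem (Finset.mem_univ _), Finset.card_univ, Fintype.card_fin]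
        _ = 2 ^ boundaryExp k (ℓ + 1) := by rw [boundaryExp]; ring

lemma two_mul_eqBoundaryExp_add_one (ℓ : ℕ) : 2 * eqBoundaryExp ℓ + 1 = 3 ^ (ℓ + 1) := by
  induction ℓ with
  | zero => rfl
  | succ ℓ ih => rw [eqBoundaryExp, pow_succ]; omega

lemma two_mul_boundaryExp_add_nine (k ℓ : ℕ) :
    2 * boundaryExp k ℓ + 9 = 3 ^ (ℓ + 1) + 2 ^ (k + ℓ + 1) + 6 * 2 ^ ℓ := by
  induction ℓ with
  | zero => simp [boundaryExp, pow_succ]; ring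
  | succ ℓ ih =>
    have := two_mul_eqBoundaryExp_add_one ℓ
    rw [boundaryExp, pow_succ 3, ← add_assoc, pow_succ 2 (k + ℓ + 1), pow_succ 2 ℓ]
    omega

lemma six_mul_two_pow_le (ℓ : ℕ) : 6 * 2 ^ ℓ ≤ 5 * 3 ^ ℓ + 1 := by
  induction ℓ with
  | zero => norm_num
  | succ ℓ ih =>
    have := Nat.one_le_pow ℓ 3 three_pos
    rw [pow_succ, pow_succ]
    omega

lemma boundaryExp_add_four_le {k ℓ : ℕ} (h : 2 ^ (k + ℓ) ≤ 2 * 3 ^ ℓ) :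
    boundaryExp k ℓ + 4 ≤ 6 * 3 ^ ℓ := by
  have := two_mul_boundaryExp_add_nine k ℓ
  have := six_mul_two_pow_le ℓ
  rw [pow_succ, pow_succ] at *
  omega

lemma two_pow_add_le_of_eq_ceil {ℓ k : ℕ} (hk : (k : ℤ) = ⌈(ℓ : ℝ) * Real.logb 2 (3 / 2)⌉) :
    2 ^ (k + ℓ) ≤ 2 * 3 ^ ℓ := by
  have hlt : (k : ℝ) < Real.logb 2 ((3 / 2) ^ ℓ * 2) := by
    rw [Real.logb_mul (by positivity) two_ne_zero, Real.logb_pow, Real.logb_self_eq_one one_lt_two]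
    exact_mod_cast hk ▸ Int.ceil_lt_add_one _
  rw [Real.lt_logb_iff_rpow_lt one_lt_two (by positivity), Real.rpow_natCast] at hlt
  have : ((2 ^ (k + ℓ) : ℕ) : ℝ) < 2 * 3 ^ ℓ := by
    calc ((2 ^ (k + ℓ) : ℕ) : ℝ) = 2 ^ k * 2 ^ ℓ := by push_cast; ring
      _ < (3 / 2) ^ ℓ * 2 * 2 ^ ℓ := by gcongr
      _ = 2 * 3 ^ ℓ := by rw [div_pow]; field_simp
  exact_mod_cast this.le

theorem stmt14_general (ℓ k : ℕ)
    (hk : (k : ℤ) = ⌈(ℓ : ℝ) * Real.logb 2 (3 / 2)⌉) :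
    Nat.card {ψ : TVert k ℓ → Fin 3 // ψ ∈ properColorings (TGraph k ℓ)} ≤
      2 ^ (6 * 3 ^ ℓ) := by
  let F (ψ : {ψ : TVert k ℓ → Fin 3 // ψ ∈ properColorings (TGraph k ℓ)}) :
      (p : Fin 3 × Fin 3) × boundaryColorings (TGraph k ℓ) p.1 p.2 :=
    ⟨(ψ.1 (inl 0), ψ.1 (inl 1)), ψ.1, ψ.2, rfl, rfl⟩
  have hF : F.Injective := fun ψ ψ' h => Subtype.ext (congrArg (fun s => s.2.1) h)
  calc _ ≤ _ := Nat.card_le_card_of_injective F hF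
    _ ≤ 2 ^ 4 * 2 ^ boundaryExp k ℓ :=
      Nat.card_sigma_le_mul (by simp) fun p => (card_boundaryColorings_TGraph_le k ℓ).2 _ _
    _ ≤ 2 ^ (6 * 3 ^ ℓ) := by
      rw [← pow_add, add_comm]
      exact Nat.pow_le_pow_right two_pos (boundaryExp_add_four_le (two_pow_add_le_of_eq_ceil hk))

/-- For every `ℓ ≥ 1`, with `k = ⌈ℓ · log₂(3/2)⌉`, the number `c_ℓ` of proper
3-colorings of `T(u,v,k,ℓ)` satisfies `c_ℓ ≤ 2^(6·3^ℓ)`. -/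
theorem stmt14 (ℓ k : ℕ) (hℓ : 1 ≤ ℓ)
    (hk : (k : ℤ) = ⌈(ℓ : ℝ) * Real.logb 2 (3 / 2)⌉) :
    Nat.card {ψ : TVert k ℓ → Fin 3 // ψ ∈ properColorings (TGraph k ℓ)} ≤
      2 ^ (6 * 3 ^ ℓ) :=
  stmt14_general ℓ k hk
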